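/- arXiv:math/0506331 — 5 statements merged into one kernel-verified Lean document; each statement's English description precedes it below -/
import Mathlib

section
/- Homotopy identity: for every α ∈ Ω of bidegree (a, b), one has L (ω * α) + ω * (L α) = (n − a + b) • α. -/
open TensorProduct ExteriorAlgebra MvPolynomial

set_option synthInstance.maxHeartbeats 1000000
set_option maxHeartbeats 1000000

noncomputable section

variable (n : ℕ)

abbrev Om (n : ℕ) := MvPolynomial (Fin n ⊕ Fin n) ℝ ⊗[ℝ] ExteriorAlgebra ℝ ((Fin n ⊕ Fin n) → ℝ)

def xx (i : Fin n) : Om n := X (Sum.inl i) ⊗ₜ 1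
def dp (i : Fin n) : Om n := X (Sum.inr i) ⊗ₜ 1
def pp (i : Fin n) : Om n := 1 ⊗ₜ ι ℝ (Pi.single (Sum.inl i) 1)
def dx (i : Fin n) : Om n := 1 ⊗ₜ ι ℝ (Pi.single (Sum.inr i) 1)

def om (n : ℕ) : Om n := ∑ i : Fin n, dp n i * dx n i

/-- The odd derivation `∂/∂p_k` of the exterior factor of `Ω`:
left contraction with the dual-basis functional of `Pi.single (Sum.inl k) 1`. -/
def dpder (k : Fin n) :
    ExteriorAlgebra ℝ ((Fin n ⊕ Fin n) → ℝ) →ₗ[ℝ] ExteriorAlgebra ℝ ((Fin n ⊕ Fin n) → ℝ) :=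
  CliffordAlgebra.contractLeft (LinearMap.proj (Sum.inl k))

/-- Left contraction `∂/∂dx_k` of the exterior factor of `Ω` with the dual-basis functional of
`Pi.single (Sum.inr k) 1`. -/
def dxder (k : Fin n) :
    ExteriorAlgebra ℝ ((Fin n ⊕ Fin n) → ℝ) →ₗ[ℝ] ExteriorAlgebra ℝ ((Fin n ⊕ Fin n) → ℝ) :=
  CliffordAlgebra.contractLeft (LinearMap.proj (Sum.inr k))

/-- The de Rham operator `d` on `Ω`. -/
def dRham (n : ℕ) : Om n →ₗ[ℝ] Om n :=
  (∑ k : Fin n, LinearMap.mulLeft ℝ (dx n k) ∘ₗ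
      TensorProduct.map (MvPolynomial.pderiv (Sum.inl k)).toLinearMap LinearMap.id) +
  (∑ k : Fin n, LinearMap.mulLeft ℝ (dp n k) ∘ₗ
      TensorProduct.map LinearMap.id (dpder n k))

/-- The homotopy operator `L` on `Ω`. -/
def hoL (n : ℕ) : Om n →ₗ[ℝ] Om n :=
  ∑ k : Fin n, TensorProduct.map LinearMap.id (dxder n k) ∘ₗ
      TensorProduct.map (MvPolynomial.pderiv (Sum.inr k)).toLinearMap LinearMap.id

/-- `α ∈ Ω` has bidegree `(a, b)`: it is an ℝ-linear combination of elements `m ⊗ w` with `m`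
a monomial of total degree `b` in the variables `X (Sum.inr i)` and `w` a product of exterior
generators exactly `a` of which are of the form `ι (Pi.single (Sum.inr i) 1)`. -/
def HasBidegree (a b : ℕ) (α : Om n) : Prop :=
  α ∈ Submodule.span ℝ
    { t : Om n | ∃ (σ : (Fin n ⊕ Fin n) →₀ ℕ) (l : List (Fin n ⊕ Fin n)),
        (∑ i : Fin n, σ (Sum.inr i)) = b ∧
        (l.countP (fun i => i.isRight)) = a ∧
        t = (MvPolynomial.monomial σ (1 : ℝ)) ⊗ₜ
              (l.map (fun i => ι ℝ (Pi.single i (1 : ℝ)))).prod }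

/-- The coefficient algebra `F`. -/
abbrev Coef (n : ℕ) := MvPolynomial (Fin n) ℝ ⊗[ℝ] ExteriorAlgebra ℝ (Fin n → ℝ)

/-- Extension by zero `(Fin n → ℝ) →ₗ ((Fin n ⊕ Fin n) → ℝ)`, sending
`Pi.single i 1` to `Pi.single (Sum.inl i) 1`. -/
def inlExt : (Fin n → ℝ) →ₗ[ℝ] ((Fin n ⊕ Fin n) → ℝ) where
  toFun v := Sum.elim v 0
  map_add' u v := by ext i; cases i <;> simp
  map_smul' c v := by ext i; cases i <;> simp

/-- The algebra embedding `j : F → Ω` induced by `Sum.inl` on polynomial variables and on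
exterior generators. -/
def jmap (n : ℕ) : Coef n →ₐ[ℝ] Om n :=
  Algebra.TensorProduct.map (MvPolynomial.rename Sum.inl)
    (ExteriorAlgebra.lift ℝ ⟨(ι ℝ).comp (inlExt n), fun _ => ι_sq_zero _⟩)

/-- The coordinate volume form `dxᵛ = dx_1 * dx_2 * ⋯ * dx_n`. -/
def dxVol (n : ℕ) : Om n := (List.ofFn (dx n)).prod

/-- The operator `∂/∂p_k` on the exterior factor of `F`. -/
def pderC (k : Fin n) :
    ExteriorAlgebra ℝ (Fin n → ℝ) →ₗ[ℝ] ExteriorAlgebra ℝ (Fin n → ℝ) :=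
  CliffordAlgebra.contractLeft (LinearMap.proj k)

/-- The Batalin–Vilkovisky operator `Δ = ∑ₖ ∂²/∂x_k∂p_k` on `F`. -/
def bv (n : ℕ) : Coef n →ₗ[ℝ] Coef n :=
  ∑ k : Fin n, TensorProduct.map (MvPolynomial.pderiv k).toLinearMap LinearMap.id ∘ₗ
      TensorProduct.map LinearMap.id (pderC n k)

/-- The element `p_1 * p_2 * ⋯ * p_n` of `F`. -/
def pVol (n : ℕ) : Coef n :=
  (List.ofFn (fun i : Fin n => (1 : MvPolynomial (Fin n) ℝ) ⊗ₜ ι ℝ (Pi.single i (1 : ℝ)))).prod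

/-!
Both `ω · _` and `L` are sums of products of the operators `dp_i ·`, `dx_i ·`, `∂/∂dp_k`,
`∂/∂dx_k`, which obey the canonical (anti)commutation relations `[∂/∂dp_k, dp_i] = δ_ki`,
`{∂/∂dx_k, dx_i} = δ_ki`, each even operator commuting with each odd one. Hence
`Lω + ωL = n + Σ_k dp_k ∂/∂dp_k - Σ_k dx_k ∂/∂dx_k`, and the two Euler operators on the right
act on elements of bidegree `(a, b)` as multiplication by `b` and by `a`.
-/

/-- With `A, B` the annihilators `∂/∂dx_k, ∂/∂dp_k`, `C, D` the creators `dp_i, dx_i` and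
`e = δ_ki`, this computes one term of `Lω + ωL`. -/
theorem mul_mul_add_mul_mul_of_ccr {R : Type*} [Ring R] {A B C D e : R}
    (he : IsIdempotentElem e) (heA : Commute e A) (heC : Commute e C)
    (hAC : Commute A C) (hBD : Commute B D)
    (hBC : B * C = e + C * B) (hAD : A * D = e - D * A) :
    A * B * (C * D) + C * D * (A * B) = e * (1 + C * B - D * A) := by
  have hABCD : A * B * (C * D) = e * (A * D) + C * (A * D) * B :=
    calc A * B * (C * D) = A * (B * C) * D := by noncomm_ring
      _ = A * e * D + A * C * (B * D) := by rw [hBC]; noncomm_ring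
      _ = e * (A * D) + C * (A * D) * B := by
        rw [← heA.eq, hAC.eq, hBD.eq]; noncomm_ring
  rw [hABCD, hAD, mul_sub, he.eq, mul_sub C, sub_mul, ← heC.eq]
  noncomm_ring

namespace ExteriorAlgebra

theorem sum_ι_mul_contractLeft_ι_mul {R M κ : Type*} [CommRing R] [AddCommGroup M] [Module R M]
    [Fintype κ] (v : κ → M) (f : κ → Module.Dual R M) (u : M) (w : ExteriorAlgebra R M) :
    ∑ k, ι R (v k) * CliffordAlgebra.contractLeft (f k) (ι R u * w) =
      ι R (∑ k, f k u • v k) * w +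
        ι R u * ∑ k, ι R (v k) * CliffordAlgebra.contractLeft (f k) w := by
  have hswap (k : κ) : ι R (v k) * ι R u = -(ι R u * ι R (v k)) :=
    eq_neg_of_add_eq_zero_left (ι_add_mul_swap _ _)
  simp_rw [CliffordAlgebra.contractLeft_ι_mul, mul_sub, mul_smul_comm, ← mul_assoc, hswap,
    neg_mul, sub_neg_eq_add, Finset.sum_add_distrib, map_sum, map_smul, Finset.sum_mul,
    Finset.mul_sum, smul_mul_assoc, mul_assoc]

end ExteriorAlgebra

variable {n}

theorem sum_ι_mul_dxder_list_prod (l : List (Fin n ⊕ Fin n)) :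
    ∑ k, ι ℝ (Pi.single (Sum.inr k) 1) * dxder n k (l.map fun i => ι ℝ (Pi.single i 1)).prod =
      (l.countP (·.isRight) : ℝ) • (l.map fun i => ι ℝ (Pi.single i (1 : ℝ))).prod := by
  induction l with
  | nil => simp [dxder, CliffordAlgebra.contractLeft_one]
  | cons j l ih =>
    simp only [dxder] at ih ⊢
    rw [List.map_cons, List.prod_cons, ExteriorAlgebra.sum_ι_mul_contractLeft_ι_mul, ih]
    rcases j with j | j
    · simp
    · simp only [LinearMap.coe_proj, Function.eval, Pi.single_apply, Sum.inr.injEq, ite_smul,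
        one_smul, zero_smul, Finset.sum_ite_eq', Finset.mem_univ, if_true, mul_smul_comm,
        List.countP_cons, Sum.isRight_inr, Nat.cast_add, Nat.cast_one, add_smul]
      abel

def derivDp (k : Fin n) : Module.End ℝ (Om n) :=
  TensorProduct.map (pderiv (Sum.inr k)).toLinearMap LinearMap.id

def derivDx (k : Fin n) : Module.End ℝ (Om n) :=
  TensorProduct.map LinearMap.id (dxder n k)

def mulDp (i : Fin n) : Module.End ℝ (Om n) := Algebra.lmul ℝ _ (dp n i)

def mulDx (i : Fin n) : Module.End ℝ (Om n) := Algebra.lmul ℝ _ (dx n i)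

section tmul

variable (m : MvPolynomial (Fin n ⊕ Fin n) ℝ) (w : ExteriorAlgebra ℝ ((Fin n ⊕ Fin n) → ℝ))

theorem derivDp_tmul (k : Fin n) : derivDp k (m ⊗ₜ w) = pderiv (Sum.inr k) m ⊗ₜ w := rfl

theorem derivDx_tmul (k : Fin n) : derivDx k (m ⊗ₜ w) = m ⊗ₜ dxder n k w := rfl

theorem mulDp_tmul (i : Fin n) : mulDp i (m ⊗ₜ w) = (X (Sum.inr i) * m) ⊗ₜ w := by
  simp [mulDp, dp, Algebra.TensorProduct.tmul_mul_tmul]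

theorem mulDx_tmul (i : Fin n) :
    mulDx i (m ⊗ₜ w) = m ⊗ₜ (ι ℝ (Pi.single (Sum.inr i) 1) * w) := by
  simp [mulDx, dx, Algebra.TensorProduct.tmul_mul_tmul]

end tmul

theorem hoL_eq_sum : hoL n = ∑ k, derivDx k * derivDp k := rfl

theorem lmul_om : Algebra.lmul ℝ _ (om n) = ∑ i, mulDp i * mulDx i := by
  simp only [om, map_sum, map_mul, mulDp, mulDx]

theorem derivDp_mul_mulDp (k i : Fin n) :
    derivDp k * mulDp i = (if k = i then 1 else 0) + mulDp i * derivDp k := by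
  refine TensorProduct.ext' fun m w => ?_
  simp only [LinearMap.add_apply, Module.End.mul_apply, mulDp_tmul, derivDp_tmul, pderiv_mul,
    pderiv_X, TensorProduct.add_tmul]
  split_ifs with h <;> simp [h]

theorem derivDx_mul_mulDx (k i : Fin n) :
    derivDx k * mulDx i = (if k = i then 1 else 0) - mulDx i * derivDx k := by
  refine TensorProduct.ext' fun m w => ?_
  simp only [LinearMap.sub_apply, Module.End.mul_apply, mulDx_tmul, derivDx_tmul, dxder,
    CliffordAlgebra.contractLeft_ι_mul, TensorProduct.tmul_sub]
  split_ifs with h <;> simp [h]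

theorem commute_derivDp_mulDx (k i : Fin n) : Commute (derivDp k) (mulDx i) :=
  TensorProduct.ext' fun _ _ => by simp only [Module.End.mul_apply, mulDx_tmul, derivDp_tmul]

theorem commute_derivDx_mulDp (k i : Fin n) : Commute (derivDx k) (mulDp i) :=
  TensorProduct.ext' fun _ _ => by simp only [Module.End.mul_apply, mulDp_tmul, derivDx_tmul]

theorem hoL_mul_lmul_om_add_lmul_om_mul_hoL :
    hoL n * Algebra.lmul ℝ _ (om n) + Algebra.lmul ℝ _ (om n) * hoL n =
      (n : Module.End ℝ (Om n)) + ∑ k, mulDp k * derivDp k - ∑ k, mulDx k * derivDx k := by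
  have hterm (k i : Fin n) :
      derivDx k * derivDp k * (mulDp i * mulDx i) + mulDp i * mulDx i * (derivDx k * derivDp k) =
        if k = i then 1 + mulDp k * derivDp k - mulDx k * derivDx k else 0 := by
    have hδ : IsIdempotentElem (if k = i then 1 else 0 : Module.End ℝ (Om n)) ∧
        ∀ T, Commute (if k = i then 1 else 0 : Module.End ℝ (Om n)) T := by
      split_ifs <;> simp [IsIdempotentElem]
    refine (mul_mul_add_mul_mul_of_ccr (R := Module.End ℝ (Om n)) hδ.1 (hδ.2 _) (hδ.2 _)
      (commute_derivDx_mulDp k i) (commute_derivDp_mulDx k i) (derivDp_mul_mulDp k i)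
      (derivDx_mul_mulDx k i)).trans ?_
    split_ifs with h
    · subst h; simp
    · simp
  rw [hoL_eq_sum, lmul_om, Finset.sum_mul_sum, Finset.sum_mul_sum,
    Finset.sum_comm (s := Finset.univ), ← Finset.sum_add_distrib]
  simp_rw [← Finset.sum_add_distrib, hterm, Finset.sum_ite_eq', Finset.mem_univ, if_true]
  refine (Finset.sum_sub_distrib (fun k => 1 + mulDp k * derivDp k)
    (fun k => mulDx k * derivDx k)).trans ?_
  rw [Finset.sum_add_distrib, Finset.sum_const, Finset.card_univ, Fintype.card_fin, nsmul_one]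

theorem sum_mulDp_mul_derivDp_monomial_tmul (σ : (Fin n ⊕ Fin n) →₀ ℕ)
    (w : ExteriorAlgebra ℝ ((Fin n ⊕ Fin n) → ℝ)) :
    (∑ k, mulDp k * derivDp k) (monomial σ 1 ⊗ₜ w) =
      (∑ k, σ (Sum.inr k)) • (monomial σ (1 : ℝ) ⊗ₜ w) := by
  simp only [LinearMap.sum_apply, Module.End.mul_apply, derivDp_tmul, mulDp_tmul,
    X_mul_pderiv_monomial, TensorProduct.smul_tmul', Finset.sum_smul]

theorem sum_mulDx_mul_derivDx_tmul_list_prod (m : MvPolynomial (Fin n ⊕ Fin n) ℝ)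
    (l : List (Fin n ⊕ Fin n)) :
    (∑ k, mulDx k * derivDx k) (m ⊗ₜ (l.map fun i => ι ℝ (Pi.single i 1)).prod) =
      l.countP (·.isRight) • (m ⊗ₜ (l.map fun i => ι ℝ (Pi.single i (1 : ℝ))).prod) := by
  simp only [LinearMap.sum_apply, Module.End.mul_apply, derivDx_tmul, mulDx_tmul,
    ← TensorProduct.tmul_sum, sum_ι_mul_dxder_list_prod, TensorProduct.tmul_smul,
    Nat.cast_smul_eq_nsmul]

theorem HasBidegree.mem_eigenspace {a b : ℕ} {α : Om n} (hα : HasBidegree n a b α) :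
    α ∈ Module.End.eigenspace
      (hoL n * Algebra.lmul ℝ _ (om n) + Algebra.lmul ℝ _ (om n) * hoL n) ((n : ℝ) - a + b) := by
  refine Submodule.span_le.mpr ?_ hα
  rintro _ ⟨σ, l, rfl, rfl, rfl⟩
  rw [SetLike.mem_coe, Module.End.mem_eigenspace_iff, hoL_mul_lmul_om_add_lmul_om_mul_hoL,
    LinearMap.sub_apply, LinearMap.add_apply, sum_mulDp_mul_derivDp_monomial_tmul,
    sum_mulDx_mul_derivDx_tmul_list_prod]
  simp only [Module.End.natCast_apply, ← Nat.cast_smul_eq_nsmul ℝ]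
  module

theorem homotopy_identity_general (n : ℕ) (a b : ℕ) (α : Om n)
    (hα : HasBidegree n a b α) :
    hoL n (om n * α) + om n * hoL n α = ((n : ℤ) - a + b) • α := by
  rw [← Int.cast_smul_eq_zsmul ℝ]
  push_cast
  exact Module.End.mem_eigenspace_iff.mp (HasBidegree.mem_eigenspace hα)

/-- Homotopy identity: for every `α ∈ Ω` of bidegree `(a, b)`, one has
`L (ω * α) + ω * (L α) = (n − a + b) • α`. -/
theorem homotopy_identity (n : ℕ) (hn : 1 ≤ n) (a b : ℕ) (α : Om n)
    (hα : HasBidegree n a b α) :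
    hoL n (om n * α) + om n * hoL n α = ((n : ℤ) - a + b) • α :=
  homotopy_identity_general n a b α hα
end
end

section
/- If α ∈ Ω has bidegree (a, b) with a − b ≠ n and satisfies ω * α = 0, then α = ω * β for some β ∈ Ω; i.e. each fixed-auxiliary-degree subcomplex of (Ω, ω∧) with auxiliary degree different from n has zero cohomology. -/
open TensorProduct ExteriorAlgebra MvPolynomial

set_option synthInstance.maxHeartbeats 1000000
set_option maxHeartbeats 1000000

noncomputable section

variable (n : ℕ)

/-! `L = ∑ₖ ∂/∂dp_k ⊗ ∂/∂dx_k` is a homotopy for multiplication by `ω`: on bidegree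
`(a, b)` the anticommutator `L ω + ω L` acts as the scalar `n + b - a`, since `∂/∂dp_k` and
`∂/∂dx_k` anticommute with `dp_j dx_j` up to `δ_jk`, leaving `n` plus the Euler operator in the
`dp`'s minus the number operator in the `dx`'s. Off `a - b = n` that scalar is invertible, so a
closed `α` equals `ω (L α) / (n + b - a)`. -/

section

variable {n : ℕ}

local notation "ε" i:max => ι ℝ (Pi.single i (1 : ℝ))

lemma om_mul_tmul (m : MvPolynomial (Fin n ⊕ Fin n) ℝ)
    (w : ExteriorAlgebra ℝ ((Fin n ⊕ Fin n) → ℝ)) :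
    om n * (m ⊗ₜ w) = ∑ j : Fin n, (X (Sum.inr j) * m) ⊗ₜ (ε (Sum.inr j) * w) := by
  simp [om, dp, dx, Finset.sum_mul, Algebra.TensorProduct.tmul_mul_tmul]

lemma hoL_tmul (m : MvPolynomial (Fin n ⊕ Fin n) ℝ)
    (w : ExteriorAlgebra ℝ ((Fin n ⊕ Fin n) → ℝ)) :
    hoL n (m ⊗ₜ w) = ∑ k : Fin n, pderiv (Sum.inr k) m ⊗ₜ dxder n k w := by
  simp [hoL, LinearMap.sum_apply, TensorProduct.map_tmul]

lemma dxder_ι_mul (v : (Fin n ⊕ Fin n) → ℝ) (k : Fin n)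
    (w : ExteriorAlgebra ℝ ((Fin n ⊕ Fin n) → ℝ)) :
    dxder n k (ι ℝ v * w) = v (Sum.inr k) • w - ι ℝ v * dxder n k w :=
  CliffordAlgebra.contractLeft_ι_mul _ _ _

lemma pderiv_dxder_anticomm (j k : Fin n) (m : MvPolynomial (Fin n ⊕ Fin n) ℝ)
    (w : ExteriorAlgebra ℝ ((Fin n ⊕ Fin n) → ℝ)) :
    pderiv (Sum.inr k) (X (Sum.inr j) * m) ⊗ₜ dxder n k (ε (Sum.inr j) * w)
        + (X (Sum.inr j) * pderiv (Sum.inr k) m) ⊗ₜ (ε (Sum.inr j) * dxder n k w)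
      = if j = k then
          (m ⊗ₜ w : Om n) + (X (Sum.inr k) * pderiv (Sum.inr k) m) ⊗ₜ w
            - m ⊗ₜ (ε (Sum.inr k) * dxder n k w)
        else 0 := by
  rw [pderiv_mul, dxder_ι_mul]
  by_cases h : j = k
  · subst h
    rw [if_pos rfl, pderiv_X_self, Pi.single_eq_same, one_mul, one_smul, add_tmul, tmul_sub,
      tmul_sub]
    abel
  · rw [if_neg h, pderiv_X_of_ne (by simp [h]), Pi.single_eq_of_ne (by simp [Ne.symm h]),
      zero_smul, zero_mul, zero_add, zero_sub, tmul_neg]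
    abel

lemma hoL_om_mul_add_om_mul_hoL_tmul (m : MvPolynomial (Fin n ⊕ Fin n) ℝ)
    (w : ExteriorAlgebra ℝ ((Fin n ⊕ Fin n) → ℝ)) :
    hoL n (om n * (m ⊗ₜ w)) + om n * hoL n (m ⊗ₜ w)
      = n • (m ⊗ₜ w : Om n) + (∑ k : Fin n, X (Sum.inr k) * pderiv (Sum.inr k) m) ⊗ₜ w
        - m ⊗ₜ (∑ k : Fin n, ε (Sum.inr k) * dxder n k w) := by
  simp_rw [om_mul_tmul, map_sum, hoL_tmul, Finset.mul_sum, om_mul_tmul]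
  rw [Finset.sum_comm (s := Finset.univ), ← Finset.sum_add_distrib]
  simp_rw [← Finset.sum_add_distrib, pderiv_dxder_anticomm, Finset.sum_ite_eq',
    Finset.mem_univ, if_true]
  rw [Finset.sum_sub_distrib, Finset.sum_add_distrib, Finset.sum_const, Finset.card_univ,
    Fintype.card_fin, sum_tmul, tmul_sum]

lemma sum_X_mul_pderiv_monomial (σ : (Fin n ⊕ Fin n) →₀ ℕ) :
    ∑ k : Fin n, X (Sum.inr k) * pderiv (Sum.inr k) (monomial σ (1 : ℝ))
      = (∑ i : Fin n, σ (Sum.inr i)) • monomial σ (1 : ℝ) := by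
  simp_rw [X_mul_pderiv_monomial, Finset.sum_smul]

lemma sum_ι_mul_dxder_ι_mul (i : Fin n ⊕ Fin n) (w : ExteriorAlgebra ℝ ((Fin n ⊕ Fin n) → ℝ)) :
    ∑ k : Fin n, ε (Sum.inr k) * dxder n k (ε i * w)
      = (if i.isRight then ε i * w else 0) + ε i * ∑ k : Fin n, ε (Sum.inr k) * dxder n k w := by
  have anticomm (k : Fin n) (u : ExteriorAlgebra ℝ ((Fin n ⊕ Fin n) → ℝ)) :
      ε (Sum.inr k) * (ε i * u) = -(ε i * (ε (Sum.inr k) * u)) := by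
    rw [← mul_assoc, ← mul_assoc, ← neg_mul, eq_neg_of_add_eq_zero_right (ι_add_mul_swap _ _)]
  simp_rw [dxder_ι_mul, mul_sub, mul_smul_comm, anticomm, sub_neg_eq_add,
    Finset.sum_add_distrib, ← Finset.mul_sum]
  congr 1
  cases i with
  | inl j => simp
  | inr j => simp [Pi.single_apply]

lemma sum_ι_mul_dxder_prod (l : List (Fin n ⊕ Fin n)) :
    ∑ k : Fin n, ε (Sum.inr k) * dxder n k (l.map (fun i => ε i)).prod
      = l.countP (fun i => i.isRight) • (l.map (fun i => ε i)).prod := by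
  induction l with
  | nil => simp [dxder, CliffordAlgebra.contractLeft_one]
  | cons i l ih =>
    rw [List.map_cons, List.prod_cons, sum_ι_mul_dxder_ι_mul, ih, mul_smul_comm,
      List.countP_cons]
    cases i.isRight <;> simp only [Bool.false_eq_true, ↓reduceIte, zero_add, add_zero, succ_nsmul']

lemma hoL_om_mul_add_om_mul_hoL_of_hasBidegree {a b : ℕ} {α : Om n}
    (hα : HasBidegree n a b α) :
    hoL n (om n * α) + om n * hoL n α = (n + b - a : ℝ) • α := by
  induction hα using Submodule.span_induction with
  | mem t ht =>
    obtain ⟨σ, l, rfl, rfl, rfl⟩ := ht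
    rw [hoL_om_mul_add_om_mul_hoL_tmul, sum_X_mul_pderiv_monomial, sum_ι_mul_dxder_prod,
      ← Nat.cast_smul_eq_nsmul ℝ, ← Nat.cast_smul_eq_nsmul ℝ, ← Nat.cast_smul_eq_nsmul ℝ,
      tmul_smul, ← smul_tmul', ← add_smul, ← sub_smul]
  | zero => simp
  | add x y _ _ ihx ihy => rw [mul_add, map_add, map_add, mul_add, smul_add, ← ihx, ← ihy]; abel
  | smul c x _ ih =>
    rw [mul_smul_comm, map_smul, map_smul, mul_smul_comm, ← smul_add, ih, smul_comm]

end

theorem aux_degree_acyclic_general (n : ℕ) (a b : ℕ) (α : Om n)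
    (hα : HasBidegree n a b α) (hdeg : (a : ℤ) - b ≠ n) (hclosed : om n * α = 0) :
    ∃ β : Om n, α = om n * β := by
  have hscalar : (n + b - a : ℝ) ≠ 0 := by
    intro h
    exact hdeg (by exact_mod_cast (by linarith : (a : ℝ) - b = n))
  have hhomotopy := hoL_om_mul_add_om_mul_hoL_of_hasBidegree hα
  rw [hclosed, map_zero, zero_add] at hhomotopy
  refine ⟨(n + b - a : ℝ)⁻¹ • hoL n α, ?_⟩
  rw [mul_smul_comm, hhomotopy, smul_smul, inv_mul_cancel₀ hscalar, one_smul]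

/-- If `α ∈ Ω` has bidegree `(a, b)` with `a − b ≠ n` and satisfies `ω * α = 0`,
then `α = ω * β` for some `β ∈ Ω`; i.e. each fixed-auxiliary-degree subcomplex of `(Ω, ω∧)`
with auxiliary degree different from `n` has zero cohomology. -/
theorem aux_degree_acyclic (n : ℕ) (hn : 1 ≤ n) (a b : ℕ) (α : Om n)
    (hα : HasBidegree n a b α) (hdeg : (a : ℤ) - b ≠ n) (hclosed : om n * α = 0) :
    ∃ β : Om n, α = om n * β :=
  aux_degree_acyclic_general n a b α hα hdeg hclosed
end
end

section
/- Existence of normal-form representatives: if α ∈ Ω satisfies ω * α = 0, then there exist f ∈ F and β ∈ Ω with α = j f * dxᵛ + ω * β; i.e. every cohomology class of the complex (Ω, ω∧) has a representative of the form f(x,p)·dx_1∧dx_2∧⋯∧dx_n. -/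
open TensorProduct ExteriorAlgebra MvPolynomial

set_option synthInstance.maxHeartbeats 1000000
set_option maxHeartbeats 1000000

noncomputable section

variable (n : ℕ)

namespace NF

variable {n : ℕ}

abbrev Ext (n : ℕ) := ExteriorAlgebra ℝ ((Fin n ⊕ Fin n) → ℝ)

/-- generator of the exterior factor -/
def g (v : Fin n ⊕ Fin n) : Ext n := ι ℝ (Pi.single v (1:ℝ))

/-- product of generators -/
def eprod (l : List (Fin n ⊕ Fin n)) : Ext n :=
  (l.map (fun i => ι ℝ (Pi.single i (1:ℝ)))).prod

lemma eprod_nil : eprod (n := n) [] = 1 := rfl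

lemma eprod_cons (v : Fin n ⊕ Fin n) (l : List (Fin n ⊕ Fin n)) :
    eprod (v :: l) = g v * eprod l := by
  simp [eprod, g]

lemma eprod_append (l₁ l₂ : List (Fin n ⊕ Fin n)) :
    eprod (l₁ ++ l₂) = eprod l₁ * eprod l₂ := by
  simp [eprod]

lemma g_anticomm (v w : Fin n ⊕ Fin n) : g (n := n) v * g w = - (g w * g v) := by
  have := ExteriorAlgebra.ι_add_mul_swap (R := ℝ)
    (Pi.single v (1:ℝ) : (Fin n ⊕ Fin n) → ℝ) (Pi.single w (1:ℝ) : (Fin n ⊕ Fin n) → ℝ)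
  rw [g, g]
  linear_combination (norm := module) this

lemma dxder_one (k : Fin n) : dxder n k 1 = 0 :=
  CliffordAlgebra.contractLeft_one _ _

lemma dxder_g_mul (k : Fin n) (v : Fin n ⊕ Fin n) (x : Ext n) :
    dxder n k (g v * x)
      = ((Pi.single v (1:ℝ) : (Fin n ⊕ Fin n) → ℝ) (Sum.inr k)) • x - g v * dxder n k x := by
  simpa [g, dxder] using
    CliffordAlgebra.contractLeft_ι_mul (Q := (0 : QuadraticForm ℝ ((Fin n ⊕ Fin n) → ℝ)))
      (d := LinearMap.proj (Sum.inr k)) (Pi.single v (1:ℝ)) x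


lemma Nsum (l : List (Fin n ⊕ Fin n)) :
    ∑ k : Fin n, g (Sum.inr k) * dxder n k (eprod l)
      = (l.countP (fun i => i.isRight) : ℝ) • eprod l := by
  induction l with
  | nil => simp [eprod_nil, dxder_one]
  | cons v l ih =>
    rw [eprod_cons]
    have expand : ∀ k : Fin n, g (Sum.inr k) * dxder n k (g v * eprod l)
        = ((Pi.single v (1:ℝ) : (Fin n ⊕ Fin n) → ℝ) (Sum.inr k)) • (g (Sum.inr k) * eprod l)
          + g v * (g (Sum.inr k) * dxder n k (eprod l)) := by
      intro k
      rw [dxder_g_mul, mul_sub, mul_smul_comm]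
      have : g (Sum.inr k) * (g v * dxder n k (eprod l))
          = - (g v * (g (Sum.inr k) * dxder n k (eprod l))) := by
        rw [← mul_assoc, g_anticomm, ← mul_assoc, neg_mul]
      rw [this, sub_neg_eq_add]
    rw [Finset.sum_congr rfl (fun k _ => expand k), Finset.sum_add_distrib,
      ← Finset.mul_sum, ih]
    rcases v with i | j
    · have h0 : ∀ k : Fin n,
          ((Pi.single (Sum.inl i) (1:ℝ) : (Fin n ⊕ Fin n) → ℝ) (Sum.inr k)) = 0 := by
        intro k; exact Pi.single_eq_of_ne (by simp) _
      simp only [h0, zero_smul, Finset.sum_const_zero, zero_add]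
      rw [List.countP_cons]
      simp [mul_smul_comm]
    · have h1 : ∀ k : Fin n,
          ((Pi.single (Sum.inr j) (1:ℝ) : (Fin n ⊕ Fin n) → ℝ) (Sum.inr k))
            = if k = j then (1:ℝ) else 0 := by
        intro k; rw [Pi.single_apply]; simp
      simp only [h1, ite_smul, one_smul, zero_smul]
      rw [Finset.sum_ite_eq' Finset.univ j
        (fun k => g (Sum.inr k) * eprod l)]
      simp only [Finset.mem_univ, if_true]
      rw [List.countP_cons]
      simp only [Sum.isRight_inr, if_true]
      push_cast
      rw [add_smul, one_smul, mul_smul_comm, add_comm]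

lemma euler (σ : (Fin n ⊕ Fin n) →₀ ℕ) :
    ∑ k : Fin n, X (Sum.inr k) * (pderiv (Sum.inr k) (monomial σ (1:ℝ)))
      = ((∑ i : Fin n, σ (Sum.inr i) : ℕ) : ℝ) • monomial σ (1:ℝ) := by
  have hterm : ∀ k : Fin n, X (Sum.inr k) * pderiv (Sum.inr k) (monomial σ (1:ℝ))
      = ((σ (Sum.inr k) : ℝ)) • monomial σ 1 := by
    intro k
    rw [pderiv_monomial, one_mul]
    rcases Nat.eq_zero_or_pos (σ (Sum.inr k)) with h | h
    · simp [h]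
    · have hs : Finsupp.single (Sum.inr k) 1 + (σ - Finsupp.single (Sum.inr k) 1) = σ := by
        rw [add_comm]; exact tsub_add_cancel_of_le (Finsupp.single_le_iff.2 h)
      rw [X, monomial_mul, one_mul, smul_monomial, smul_eq_mul, mul_one, hs]
  rw [Finset.sum_congr rfl (fun k _ => hterm k), ← Finset.sum_smul]
  push_cast
  rfl


lemma hoL_tmul (m : MvPolynomial (Fin n ⊕ Fin n) ℝ) (w : Ext n) :
    hoL n (m ⊗ₜ w) = ∑ k : Fin n, (pderiv (Sum.inr k) m) ⊗ₜ (dxder n k w) := by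
  simp [hoL, LinearMap.sum_apply, TensorProduct.map_tmul]

lemma om_mul_tmul (m : MvPolynomial (Fin n ⊕ Fin n) ℝ) (w : Ext n) :
    om n * (m ⊗ₜ w) = ∑ k : Fin n, (X (Sum.inr k) * m) ⊗ₜ (g (Sum.inr k) * w) := by
  simp [om, dp, dx, Finset.sum_mul, Algebra.TensorProduct.tmul_mul_tmul, g]

lemma keykj (k j : Fin n) (m : MvPolynomial (Fin n ⊕ Fin n) ℝ) (w : Ext n) :
    (X (Sum.inr j) * pderiv (Sum.inr k) m) ⊗ₜ[ℝ] (g (Sum.inr j) * dxder n k w)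
      + (pderiv (Sum.inr k) (X (Sum.inr j) * m)) ⊗ₜ[ℝ] (dxder n k (g (Sum.inr j) * w))
      = if k = j then
          (m ⊗ₜ[ℝ] w - m ⊗ₜ[ℝ] (g (Sum.inr k) * dxder n k w)
            + (X (Sum.inr k) * pderiv (Sum.inr k) m) ⊗ₜ[ℝ] w)
        else 0 := by
  have hd : pderiv (Sum.inr k) (X (Sum.inr j) * m)
      = (if k = j then m else 0) + X (Sum.inr j) * pderiv (Sum.inr k) m := by
    rw [pderiv_mul, pderiv_X]
    by_cases h : k = j
    · subst h; simp
    · rw [Pi.single_eq_of_ne (by simp [Ne.symm h]) _]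
      simp [h]
  have hc : dxder n k (g (Sum.inr j) * w) = (if k = j then w else 0) - g (Sum.inr j) * dxder n k w := by
    rw [dxder_g_mul]
    congr 1
    rw [Pi.single_apply]
    by_cases h : k = j
    · subst h; simp
    · simp [h, Ne.symm h]
  rw [hd, hc]
  by_cases h : k = j
  · subst h
    simp only [eq_self_iff_true, if_true, if_pos rfl, TensorProduct.tmul_sub, TensorProduct.add_tmul,
      TensorProduct.tmul_add]
    abel
  · simp only [if_neg h, TensorProduct.tmul_sub, TensorProduct.add_tmul,
      TensorProduct.tmul_zero, zero_add, TensorProduct.zero_tmul]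
    abel

lemma key (σ : (Fin n ⊕ Fin n) →₀ ℕ) (l : List (Fin n ⊕ Fin n)) :
    om n * hoL n (monomial σ (1:ℝ) ⊗ₜ eprod l)
      + hoL n (om n * (monomial σ (1:ℝ) ⊗ₜ eprod l))
      = (((n : ℝ) + (∑ i : Fin n, σ (Sum.inr i) : ℕ))
            - (l.countP (fun i => i.isRight) : ℕ))
          • (monomial σ (1:ℝ) ⊗ₜ eprod l) := by
  set m := monomial σ (1:ℝ) with hm
  set w := eprod l with hw
  have h1 : om n * hoL n (m ⊗ₜ w)
      = ∑ k : Fin n, ∑ j : Fin n,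
          (X (Sum.inr j) * pderiv (Sum.inr k) m) ⊗ₜ[ℝ] (g (Sum.inr j) * dxder n k w) := by
    rw [hoL_tmul, Finset.mul_sum]
    exact Finset.sum_congr rfl fun k _ => om_mul_tmul _ _
  have h2 : hoL n (om n * (m ⊗ₜ w))
      = ∑ k : Fin n, ∑ j : Fin n,
          (pderiv (Sum.inr k) (X (Sum.inr j) * m)) ⊗ₜ[ℝ] (dxder n k (g (Sum.inr j) * w)) := by
    rw [om_mul_tmul, map_sum]
    rw [Finset.sum_comm]
    exact Finset.sum_congr rfl fun j _ => hoL_tmul _ _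
  rw [h1, h2, ← Finset.sum_add_distrib]
  have h3 : ∀ k : Fin n,
      (∑ j : Fin n,
        (X (Sum.inr j) * pderiv (Sum.inr k) m) ⊗ₜ[ℝ] (g (Sum.inr j) * dxder n k w))
      + (∑ j : Fin n,
        (pderiv (Sum.inr k) (X (Sum.inr j) * m)) ⊗ₜ[ℝ] (dxder n k (g (Sum.inr j) * w)))
      = m ⊗ₜ[ℝ] w - m ⊗ₜ[ℝ] (g (Sum.inr k) * dxder n k w)
          + (X (Sum.inr k) * pderiv (Sum.inr k) m) ⊗ₜ[ℝ] w := by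
    intro k
    rw [← Finset.sum_add_distrib, Finset.sum_congr rfl (fun j _ => keykj k j m w),
      Finset.sum_ite_eq Finset.univ k _]
    simp
  rw [Finset.sum_congr rfl (fun k _ => h3 k), Finset.sum_add_distrib,
    Finset.sum_sub_distrib]
  have e1 : (∑ _k : Fin n, m ⊗ₜ[ℝ] w) = (n : ℝ) • m ⊗ₜ[ℝ] w := by
    rw [Finset.sum_const, Finset.card_univ, Fintype.card_fin, ← Nat.cast_smul_eq_nsmul ℝ]
  have e2 : (∑ k : Fin n, m ⊗ₜ[ℝ] (g (Sum.inr k) * dxder n k w))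
      = ((l.countP (fun i => i.isRight) : ℕ) : ℝ) • m ⊗ₜ[ℝ] w := by
    rw [hw, ← TensorProduct.tmul_sum, Nsum, TensorProduct.tmul_smul]
  have e3 : (∑ k : Fin n, (X (Sum.inr k) * pderiv (Sum.inr k) m) ⊗ₜ[ℝ] w)
      = ((∑ i : Fin n, σ (Sum.inr i) : ℕ) : ℝ) • m ⊗ₜ[ℝ] w := by
    rw [hm, ← TensorProduct.sum_tmul, euler, TensorProduct.smul_tmul']
  rw [e1, e2, e3]
  module


lemma eprod_mul_g (l : List (Fin n ⊕ Fin n)) (v : Fin n ⊕ Fin n) :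
    eprod l * g v = ((-1 : ℝ)^l.length) • (g v * eprod l) := by
  induction l with
  | nil => simp [eprod_nil]
  | cons w l ih =>
    rw [eprod_cons, mul_assoc, ih, List.length_cons, mul_smul_comm, ← mul_assoc,
      g_anticomm w v, neg_mul, ← mul_assoc, pow_succ]
    rw [smul_neg, ← neg_smul]
    ring_nf

lemma g_mul_eprod (v : Fin n ⊕ Fin n) (l : List (Fin n ⊕ Fin n)) :
    g v * eprod l = ((-1 : ℝ)^l.length) • (eprod l * g v) := by
  rw [eprod_mul_g, smul_smul, ← pow_add, ← two_mul, pow_mul, neg_one_sq, one_pow, one_smul]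

lemma eprod_perm {l l' : List (Fin n ⊕ Fin n)} (h : l.Perm l') :
    ∃ c : ℝ, (c = 1 ∨ c = -1) ∧ eprod l = c • eprod l' := by
  induction h with
  | nil => exact ⟨1, Or.inl rfl, by simp⟩
  | cons x h ih =>
    obtain ⟨c, hc, he⟩ := ih
    exact ⟨c, hc, by rw [eprod_cons, eprod_cons, he, mul_smul_comm]⟩
  | swap x y l =>
    refine ⟨-1, Or.inr rfl, ?_⟩
    rw [eprod_cons, eprod_cons, eprod_cons, eprod_cons, ← mul_assoc, ← mul_assoc,
      g_anticomm y x]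
    simp
  | trans h1 h2 ih1 ih2 =>
    obtain ⟨c1, hc1, he1⟩ := ih1
    obtain ⟨c2, hc2, he2⟩ := ih2
    refine ⟨c1 * c2, ?_, by rw [he1, he2, smul_smul]⟩
    rcases hc1 with rfl | rfl <;> rcases hc2 with rfl | rfl <;> simp

lemma g_mul_eprod_eq_zero_of_mem (v : Fin n ⊕ Fin n) (l : List (Fin n ⊕ Fin n))
    (h : v ∈ l) : g v * eprod l = 0 := by
  induction l with
  | nil => simp at h
  | cons w l ih =>
    rw [eprod_cons, ← mul_assoc]
    by_cases hvw : v = w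
    · subst hvw
      rw [show g v * g v = 0 from ExteriorAlgebra.ι_sq_zero _, zero_mul]
    · have hv : v ∈ l := by
        rcases List.mem_cons.1 h with h' | h'
        · exact absurd h' hvw
        · exact h'
      rw [g_anticomm, neg_mul, mul_assoc, ih hv, mul_zero, neg_zero]

lemma eprod_eq_zero_of_not_nodup (l : List (Fin n ⊕ Fin n)) (h : ¬ l.Nodup) :
    eprod l = 0 := by
  induction l with
  | nil => simp at h
  | cons v l ih =>
    rw [eprod_cons]
    by_cases hnd : l.Nodup
    · have hv : v ∈ l := by
        by_contra hv
        exact h (List.nodup_cons.2 ⟨hv, hnd⟩)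
      exact g_mul_eprod_eq_zero_of_mem v l hv
    · rw [ih hnd, mul_zero]

lemma perm_finRange (lb : List (Fin n)) (hnd : lb.Nodup) (hlen : lb.length = n) :
    lb.Perm (List.finRange n) := by
  apply List.Subperm.perm_of_length_le (hnd.subperm (fun x _ => List.mem_finRange x))
  rw [hlen, List.length_finRange]

lemma separate (l : List (Fin n ⊕ Fin n)) :
    ∃ (c : ℝ) (la lb : List (Fin n)),
      lb.length = l.countP (fun i => i.isRight) ∧
      eprod l = c • (eprod (la.map Sum.inl) * eprod (lb.map Sum.inr)) := by
  induction l with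
  | nil => exact ⟨1, [], [], by simp, by simp [eprod_nil]⟩
  | cons v l ih =>
    obtain ⟨c, la, lb, hlen, he⟩ := ih
    cases v with
    | inl i =>
      refine ⟨c, i :: la, lb, ?_, ?_⟩
      · rw [List.countP_cons]; simp [hlen]
      · rw [eprod_cons, he, mul_smul_comm, List.map_cons, eprod_cons, mul_assoc]
    | inr j =>
      refine ⟨((-1 : ℝ)^la.length) * c, la, j :: lb, ?_, ?_⟩
      · rw [List.countP_cons]; simp [hlen]
      · rw [eprod_cons, he, mul_smul_comm, ← mul_assoc, g_mul_eprod,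
          List.length_map, smul_mul_assoc, List.map_cons, eprod_cons, mul_assoc, smul_smul,
          mul_comm c]

lemma top_norm (lb : List (Fin n)) (hlen : lb.length = n) :
    ∃ c : ℝ, eprod (lb.map Sum.inr) = c • eprod ((List.finRange n).map Sum.inr) := by
  by_cases hnd : lb.Nodup
  · obtain ⟨c, _, he⟩ := eprod_perm ((perm_finRange lb hnd hlen).map Sum.inr)
    exact ⟨c, he⟩
  · refine ⟨0, ?_⟩
    rw [eprod_eq_zero_of_not_nodup]
    · simp
    · exact fun hc => hnd (hc.of_map)


lemma ext_span (y : Ext n) :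
    y ∈ Submodule.span ℝ { y : Ext n | ∃ l, y = eprod l } := by
  induction y using CliffordAlgebra.induction with
  | algebraMap r =>
    have h1 : (algebraMap ℝ (Ext n)) r = r • eprod [] := by
      rw [eprod_nil, Algebra.algebraMap_eq_smul_one]
    rw [h1]
    exact Submodule.smul_mem _ _ (Submodule.subset_span ⟨[], rfl⟩)
  | ι v =>
    have hv : v = ∑ i : Fin n ⊕ Fin n,
        v i • (Pi.single i (1:ℝ) : (Fin n ⊕ Fin n) → ℝ) := by
      conv_lhs => rw [← Finset.univ_sum_single v]
      refine Finset.sum_congr rfl fun i _ => ?_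
      rw [← Pi.single_smul, smul_eq_mul, mul_one]
    rw [hv, map_sum]
    refine Submodule.sum_mem _ fun i _ => ?_
    rw [map_smul]
    refine Submodule.smul_mem _ _ (Submodule.subset_span ⟨[i], ?_⟩)
    simp [eprod]
  | mul x y hx hy =>
    have hmm := Submodule.mul_mem_mul hx hy
    rw [Submodule.span_mul_span] at hmm
    refine Submodule.span_le.2 ?_ hmm
    rintro t ht
    obtain ⟨a, ⟨l₁, rfl⟩, b, ⟨l₂, rfl⟩, rfl⟩ := Set.mem_mul.1 ht
    exact Submodule.subset_span ⟨l₁ ++ l₂, (eprod_append l₁ l₂).symm⟩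
  | add x y hx hy => exact Submodule.add_mem _ hx hy

lemma poly_span (p : MvPolynomial (Fin n ⊕ Fin n) ℝ) :
    p ∈ Submodule.span ℝ { q : MvPolynomial (Fin n ⊕ Fin n) ℝ | ∃ σ, q = monomial σ (1:ℝ) } := by
  rw [← p.support_sum_monomial_coeff]
  refine Submodule.sum_mem _ fun σ _ => ?_
  have h1 : monomial σ (coeff σ p) = (coeff σ p) • monomial σ (1:ℝ) := by
    rw [smul_monomial, smul_eq_mul, mul_one]
  rw [h1]
  exact Submodule.smul_mem _ _ (Submodule.subset_span ⟨σ, rfl⟩)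

lemma span_S (z : Om n) :
    z ∈ Submodule.span ℝ
      {t : Om n | ∃ σ l, t = monomial σ (1:ℝ) ⊗ₜ[ℝ] eprod l} := by
  set SS := Submodule.span ℝ
    {t : Om n | ∃ σ l, t = monomial σ (1:ℝ) ⊗ₜ[ℝ] eprod l} with hSS
  induction z using TensorProduct.induction_on with
  | zero => exact SS.zero_mem
  | tmul p y =>
    have h1 : ∀ l : List (Fin n ⊕ Fin n), p ⊗ₜ[ℝ] eprod l ∈ SS := by
      intro l
      have hle : Submodule.span ℝ
          { q : MvPolynomial (Fin n ⊕ Fin n) ℝ | ∃ σ, q = monomial σ (1:ℝ) } ≤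
          Submodule.comap ((TensorProduct.mk ℝ (MvPolynomial (Fin n ⊕ Fin n) ℝ)
            (Ext n)).flip (eprod l)) SS := by
        rw [Submodule.span_le]
        rintro q ⟨σ, rfl⟩
        exact Submodule.subset_span ⟨σ, l, rfl⟩
      exact hle (poly_span p)
    have hle2 : Submodule.span ℝ { y : Ext n | ∃ l, y = eprod l } ≤
        Submodule.comap (TensorProduct.mk ℝ (MvPolynomial (Fin n ⊕ Fin n) ℝ)
          (Ext n) p) SS := by
      rw [Submodule.span_le]
      rintro yy ⟨l, rfl⟩
      exact h1 l
    exact hle2 (ext_span y)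
  | add x y hx hy => exact SS.add_mem hx hy

lemma tmul_list_prod (l : List (Ext n)) :
    (l.map (fun w => (1 : MvPolynomial (Fin n ⊕ Fin n) ℝ) ⊗ₜ[ℝ] w)).prod
      = (1 : MvPolynomial (Fin n ⊕ Fin n) ℝ) ⊗ₜ[ℝ] l.prod := by
  induction l with
  | nil => simp [Algebra.TensorProduct.one_def]
  | cons w l ih =>
    rw [List.map_cons, List.prod_cons, ih, List.prod_cons,
      Algebra.TensorProduct.tmul_mul_tmul, one_mul]

lemma dxVol_eq :
    dxVol n = (1 : MvPolynomial (Fin n ⊕ Fin n) ℝ)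
      ⊗ₜ[ℝ] eprod ((List.finRange n).map Sum.inr) := by
  rw [dxVol, List.ofFn_eq_map]
  have h1 : (List.finRange n).map (dx n)
      = ((List.finRange n).map (fun i => ι ℝ (Pi.single (Sum.inr i) (1:ℝ)))).map
          (fun w => (1 : MvPolynomial (Fin n ⊕ Fin n) ℝ) ⊗ₜ[ℝ] w) := by
    rw [List.map_map]; rfl
  rw [h1, tmul_list_prod]
  congr 1
  rw [eprod, List.map_map]
  congr 1

lemma inlExt_single (i : Fin n) :
    inlExt n (Pi.single i (1:ℝ)) = Pi.single (Sum.inl i) (1:ℝ) := by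
  ext v
  cases v with
  | inl a =>
    simp only [inlExt, LinearMap.coe_mk, AddHom.coe_mk, Sum.elim_inl]
    rw [Pi.single_apply, Pi.single_apply]
    simp
  | inr a =>
    simp only [inlExt, LinearMap.coe_mk, AddHom.coe_mk, Sum.elim_inr]
    rw [Pi.single_apply]
    simp

lemma jmap_tmul_prod (σ' : Fin n →₀ ℕ) (la : List (Fin n)) :
    jmap n ((monomial σ' (1:ℝ)) ⊗ₜ[ℝ]
        (la.map (fun i => ι ℝ (Pi.single i (1:ℝ)))).prod)
      = (monomial (σ'.mapDomain Sum.inl) (1:ℝ)) ⊗ₜ[ℝ] eprod (la.map Sum.inl) := by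
  rw [jmap, Algebra.TensorProduct.map_tmul, rename_monomial]
  congr 1
  rw [map_list_prod, eprod, List.map_map, List.map_map]
  congr 1
  refine List.map_congr_left fun i _ => ?_
  simp only [Function.comp_apply]
  rw [ExteriorAlgebra.lift_ι_apply]
  simp only [LinearMap.coe_comp, Function.comp_apply]
  rw [inlExt_single]

lemma om_eq : om n = ∑ k : Fin n, X (Sum.inr k) ⊗ₜ[ℝ] g (Sum.inr k) := by
  rw [show om n = ∑ i : Fin n, dp n i * dx n i from rfl]
  refine Finset.sum_congr rfl fun k _ => ?_
  rw [dp, dx, Algebra.TensorProduct.tmul_mul_tmul, mul_one, one_mul]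
  rfl

lemma om_sq : om n * om n = 0 := by
  rw [om_eq, Finset.sum_mul_sum]
  have hterm : ∀ i j : Fin n,
      ((X (Sum.inr i) : MvPolynomial (Fin n ⊕ Fin n) ℝ) ⊗ₜ[ℝ] g (Sum.inr i)) * (X (Sum.inr j) ⊗ₜ[ℝ] g (Sum.inr j))
        = (X (Sum.inr i) * X (Sum.inr j)) ⊗ₜ[ℝ] (g (Sum.inr i) * g (Sum.inr j)) :=
    fun i j => Algebra.TensorProduct.tmul_mul_tmul _ _ _ _
  rw [Finset.sum_congr rfl fun i _ => Finset.sum_congr rfl fun j _ => hterm i j]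
  set Sm := ∑ i : Fin n, ∑ j : Fin n,
      ((X (Sum.inr i) * X (Sum.inr j) : MvPolynomial (Fin n ⊕ Fin n) ℝ))
        ⊗ₜ[ℝ] (g (Sum.inr i) * g (Sum.inr j)) with hS
  have hneg : Sm = -Sm := by
    conv_lhs => rw [hS, Finset.sum_comm]
    rw [← Finset.sum_neg_distrib]
    refine Finset.sum_congr rfl fun i _ => ?_
    rw [← Finset.sum_neg_distrib]
    refine Finset.sum_congr rfl fun j _ => ?_
    rw [mul_comm (X (Sum.inr j)) (X (Sum.inr i)), g_anticomm (Sum.inr j) (Sum.inr i),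
      TensorProduct.tmul_neg]
  have h2 : Sm + Sm = 0 := by
    nth_rewrite 1 [hneg]
    rw [neg_add_cancel]
  have h3 : (2:ℝ) • Sm = 0 := by
    rw [two_smul]; exact h2
  rcases smul_eq_zero.1 h3 with h | h
  · norm_num at h
  · exact h

/-- the normal-form linear map `f ↦ j f * dxᵛ` -/
def Lmap (n : ℕ) : Coef n →ₗ[ℝ] Om n :=
  (LinearMap.mulRight ℝ (dxVol n)) ∘ₗ (jmap n).toLinearMap

lemma weight0_mem (σ : (Fin n ⊕ Fin n) →₀ ℕ) (l : List (Fin n ⊕ Fin n))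
    (h : ((l.countP (fun i => i.isRight) : ℕ) : ℝ)
        = (n : ℝ) + ((∑ i : Fin n, σ (Sum.inr i) : ℕ) : ℝ)) :
    (monomial σ (1:ℝ) ⊗ₜ[ℝ] eprod l) ∈ LinearMap.range (Lmap n) := by
  obtain ⟨c, la, lb, hlen, he⟩ := separate l
  by_cases hnd : lb.Nodup
  · have hle : lb.length ≤ n := by
      have := hnd.length_le_card
      simpa using this
    have hcount : l.countP (fun i => i.isRight) = n + (∑ i : Fin n, σ (Sum.inr i)) := by
      exact_mod_cast h
    have hb : (∑ i : Fin n, σ (Sum.inr i)) = 0 := by omega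
    have hlbn : lb.length = n := by omega
    have hσ : ∀ j : Fin n, σ (Sum.inr j) = 0 := fun j =>
      Finset.sum_eq_zero_iff.1 hb j (Finset.mem_univ j)
    obtain ⟨c₂, he₂⟩ := top_norm lb hlbn
    set σ' : Fin n →₀ ℕ := Finsupp.equivFunOnFinite.symm (fun i => σ (Sum.inl i)) with hσ'
    have hmap : Finsupp.mapDomain Sum.inl σ' = σ := by
      ext v
      cases v with
      | inl i =>
        rw [Finsupp.mapDomain_apply Sum.inl_injective]
        rfl
      | inr j =>
        rw [Finsupp.mapDomain_notin_range _ _ (by simp), hσ j]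
    refine ⟨(c * c₂) • ((monomial σ' (1:ℝ)) ⊗ₜ[ℝ]
      (la.map (fun i => ι ℝ (Pi.single i (1:ℝ)))).prod), ?_⟩
    rw [map_smul, Lmap, LinearMap.comp_apply, AlgHom.toLinearMap_apply, jmap_tmul_prod,
      hmap, LinearMap.mulRight_apply, dxVol_eq, Algebra.TensorProduct.tmul_mul_tmul,
      mul_one, he, he₂]
    rw [mul_smul_comm, smul_smul, TensorProduct.tmul_smul]
  · have h0 : eprod l = 0 := by
      rw [he, eprod_eq_zero_of_not_nodup (lb.map Sum.inr)
        (fun hc => hnd hc.of_map), mul_zero, smul_zero]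
    rw [h0, TensorProduct.tmul_zero]
    exact zero_mem _

end NF

/-- Existence of normal-form representatives: if `α ∈ Ω` satisfies `ω * α = 0`,
then there exist `f ∈ F` and `β ∈ Ω` with `α = j f * dxᵛ + ω * β`. -/
theorem normal_form_exists (n : ℕ) (hn : 1 ≤ n) (α : Om n) (hclosed : om n * α = 0) :
    ∃ (f : Coef n) (β : Om n), α = jmap n f * dxVol n + om n * β := by
  classical
  set E : Module.End ℝ (Om n) := LinearMap.mulLeft ℝ (om n) with hE
  set D : Module.End ℝ (Om n) := E ∘ₗ hoL n + hoL n ∘ₗ E with hD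
  set W : ℝ → Submodule ℝ (Om n) := fun r => Submodule.span ℝ
    {t : Om n | ∃ (σ : (Fin n ⊕ Fin n) →₀ ℕ) (l : List (Fin n ⊕ Fin n)),
        ((n : ℝ) + ((∑ i : Fin n, σ (Sum.inr i) : ℕ) : ℝ)
          - ((l.countP (fun i => i.isRight) : ℕ) : ℝ) = r)
        ∧ t = monomial σ (1:ℝ) ⊗ₜ[ℝ] NF.eprod l} with hW
  have hDapp : ∀ x : Om n, D x = om n * hoL n x + hoL n (om n * x) := by
    intro x
    rw [hD, LinearMap.add_apply, LinearMap.comp_apply, LinearMap.comp_apply, hE,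
      LinearMap.mulLeft_apply, LinearMap.mulLeft_apply]
  have h_eig : ∀ r, W r ≤ Module.End.eigenspace D r := by
    intro r
    rw [hW]
    refine Submodule.span_le.2 ?_
    rintro t ⟨σ, l, hw, rfl⟩
    rw [SetLike.mem_coe, Module.End.mem_eigenspace_iff, hDapp, NF.key σ l, hw]
  have hα : α ∈ ⨆ r : ℝ, W r := by
    refine Submodule.span_le.2 ?_ (NF.span_S (n := n) α)
    rintro t ⟨σ, l, rfl⟩
    exact Submodule.mem_iSup_of_mem _ (Submodule.subset_span ⟨σ, l, rfl, rfl⟩)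
  obtain ⟨cf, hcf, hsum⟩ := (Submodule.mem_iSup_iff_exists_finsupp W α).1 hα
  have hEeig : ∀ r, E (cf r) ∈ Module.End.eigenspace D r := by
    intro r
    have h1 : cf r ∈ Module.End.eigenspace D r := h_eig r (hcf r)
    rw [Module.End.mem_eigenspace_iff] at h1 ⊢
    have hEE : ∀ x : Om n, E (E x) = 0 := by
      intro x
      rw [hE, LinearMap.mulLeft_apply, LinearMap.mulLeft_apply, ← mul_assoc,
        NF.om_sq, zero_mul]
    have h2 : D (E (cf r)) = E (D (cf r)) := by
      rw [hD]
      simp only [LinearMap.add_apply, LinearMap.comp_apply, map_add]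
      rw [hEE, map_zero, add_zero, hEE, zero_add]
    rw [h2, h1, map_smul]
  have hsupp : ∀ r, om n * cf r = 0 := by
    intro r₀
    by_cases hr : r₀ ∈ cf.support
    · have hzero : (∑ r ∈ cf.support, E (cf r)) = 0 := by
        rw [← map_sum]
        have : (∑ r ∈ cf.support, cf r) = α := hsum
        rw [this, hE, LinearMap.mulLeft_apply, hclosed]
      have hmem2 : E (cf r₀) ∈ ⨆ (r : ℝ) (_ : r ≠ r₀), Module.End.eigenspace D r := by
        have hneg : E (cf r₀) = - ∑ r ∈ cf.support.erase r₀, E (cf r) := by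
          rw [eq_neg_iff_add_eq_zero]
          rw [← Finset.add_sum_erase cf.support (fun r => E (cf r)) hr] at hzero
          exact hzero
        rw [hneg]
        refine Submodule.neg_mem _ (Submodule.sum_mem _ fun r hr' => ?_)
        exact Submodule.mem_iSup_of_mem r
          (Submodule.mem_iSup_of_mem (Finset.ne_of_mem_erase hr') (hEeig r))
      have h0 : E (cf r₀) = 0 :=
        Submodule.disjoint_def.1 (Module.End.eigenspaces_iSupIndep D r₀) _
          (hEeig r₀) hmem2
      rw [hE, LinearMap.mulLeft_apply] at h0
      exact h0
    · rw [Finsupp.notMem_support_iff.1 hr, mul_zero]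
  have hrep : ∀ r ∈ cf.support, ∃ fb : Coef n × Om n,
      cf r = jmap n fb.1 * dxVol n + om n * fb.2 := by
    intro r _
    by_cases hr0 : r = 0
    · subst hr0
      have h1 : cf 0 ∈ LinearMap.range (NF.Lmap n) := by
        refine Submodule.span_le.2 ?_ (hcf 0)
        rintro t ⟨σ, l, hw, rfl⟩
        rw [SetLike.mem_coe]
        refine NF.weight0_mem σ l ?_
        linarith [hw]
      obtain ⟨f, hf⟩ := h1
      refine ⟨(f, 0), ?_⟩
      rw [← hf, NF.Lmap, LinearMap.comp_apply, AlgHom.toLinearMap_apply,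
        LinearMap.mulRight_apply, mul_zero, add_zero]
    · have hDr : om n * hoL n (cf r) + hoL n (om n * cf r) = r • cf r := by
        have h1 := h_eig r (hcf r)
        rw [Module.End.mem_eigenspace_iff, hDapp] at h1
        exact h1
      rw [hsupp r, map_zero, add_zero] at hDr
      refine ⟨(0, r⁻¹ • hoL n (cf r)), ?_⟩
      rw [map_zero, zero_mul, zero_add, mul_smul_comm, hDr, smul_smul,
        inv_mul_cancel₀ hr0, one_smul]
  choose fb hfb using hrep
  refine ⟨∑ r ∈ cf.support.attach, (fb r.1 r.2).1,
          ∑ r ∈ cf.support.attach, (fb r.1 r.2).2, ?_⟩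
  rw [map_sum, Finset.sum_mul, Finset.mul_sum, ← Finset.sum_add_distrib]
  have hα2 : α = ∑ r ∈ cf.support, cf r := hsum.symm
  rw [hα2, ← Finset.sum_attach cf.support (fun r => cf r)]
  exact Finset.sum_congr rfl fun r _ => hfb r.1 r.2
end
end

section
/- Uniqueness of normal-form representatives: if f ∈ F and β ∈ Ω satisfy j f * dxᵛ = ω * β, then f = 0. Together with the existence of such representatives this identifies the cohomology of the complex (Ω, ω∧) with F, the coordinate expression of semidensities (part (1) of the Theorem in local Darboux coordinates). -/
open TensorProduct ExteriorAlgebra MvPolynomial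

set_option synthInstance.maxHeartbeats 1000000
set_option maxHeartbeats 1000000

noncomputable section

variable (n : ℕ)

/-
Let `Φ : Ω → F` read off the coefficient of `dxᵛ` and then set every `dp_i` to zero: `Φ` strips
`dx_n, …, dx_1` off the right of the exterior factor by successive right contractions (taken in
this order, they produce no signs) and kills the `dp_i` by a polynomial substitution. Every term
of `ω * β` carries a factor `dp_i`, so `Φ (ω * β) = 0`, while `j f` involves neither `dx`'s nor
`dp`'s, so `Φ (j f * dxᵛ) = f`. Hence `j f * dxᵛ = ω * β` forces `f = 0`.
-/

namespace CliffordAlgebra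

variable {R M : Type*} [CommRing R] [AddCommGroup M] [Module R M] {Q : QuadraticForm R M}

theorem contractRight_mul_ι_of_contractRight_eq_zero {d : Module.Dual R M}
    {a : CliffordAlgebra Q} (ha : contractRight a d = 0) (m : M) :
    contractRight (a * ι Q m) d = d m • a := by
  rw [contractRight_mul_ι, ha, zero_mul, sub_zero]

theorem prod_contractRight_mul_prod_ι {κ : Type*} (v : κ → M) (d : κ → Module.Dual R M)
    (hdv_self : ∀ i, d i (v i) = 1) (hdv_ne : Pairwise fun i j => d i (v j) = 0)
    (L : List κ) (hL : L.Nodup) {a : CliffordAlgebra Q}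
    (ha : ∀ i ∈ L, contractRight a (d i) = 0) :
    (L.map fun i => contractRight.flip (d i)).prod (a * (L.map fun i => ι Q (v i)).prod) = a := by
  induction L generalizing a with
  | nil => simp
  | cons i L ih =>
    obtain ⟨hiL, hL⟩ := List.nodup_cons.mp hL
    have hvanish : ∀ j ∈ L, contractRight (a * ι Q (v i)) (d j) = 0 := fun j hj => by
      rw [contractRight_mul_ι_of_contractRight_eq_zero (ha j (List.mem_cons_of_mem i hj)),
        hdv_ne (ne_of_mem_of_not_mem hj hiL), zero_smul]
    rw [List.map_cons, List.map_cons, List.prod_cons, List.prod_cons, Module.End.mul_apply,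
      ← mul_assoc, ih hL hvanish, LinearMap.flip_apply,
      contractRight_mul_ι_of_contractRight_eq_zero (ha i List.mem_cons_self), hdv_self,
      one_smul]

end CliffordAlgebra

theorem ExteriorAlgebra.contractRight_map_eq_zero {R M N : Type*} [CommRing R]
    [AddCommGroup M] [Module R M] [AddCommGroup N] [Module R N] (f : N →ₗ[R] M)
    {d : Module.Dual R M} (hdf : ∀ x, d (f x) = 0) (w : ExteriorAlgebra R N) :
    CliffordAlgebra.contractRight (map f w) d = 0 := by
  induction w using CliffordAlgebra.right_induction with
  | algebraMap r => rw [AlgHom.commutes, CliffordAlgebra.contractRight_algebraMap]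
  | add x y hx hy => rw [map_add, map_add, LinearMap.add_apply, hx, hy, add_zero]
  | mul_ι m x hx =>
    rw [map_mul, map_apply_ι,
      CliffordAlgebra.contractRight_mul_ι_of_contractRight_eq_zero hx, hdf, zero_smul]

namespace NormalForm

variable {n : ℕ}

lemma jmap_tmul (q : MvPolynomial (Fin n) ℝ) (w : ExteriorAlgebra ℝ (Fin n → ℝ)) :
    jmap n (q ⊗ₜ w) = rename Sum.inl q ⊗ₜ ExteriorAlgebra.map (inlExt n) w :=
  rfl

lemma funLeft_inl_comp_inlExt : LinearMap.funLeft ℝ ℝ Sum.inl ∘ₗ inlExt n = LinearMap.id :=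
  rfl

lemma dxVol_eq_one_tmul :
    dxVol n = 1 ⊗ₜ (List.ofFn fun i => ι ℝ (Pi.single (Sum.inr i) (1 : ℝ))).prod := by
  rw [dxVol, ← Algebra.TensorProduct.includeRight_apply, map_list_prod, List.map_ofFn]
  rfl

def contractDxVol (n : ℕ) : Module.End ℝ (ExteriorAlgebra ℝ ((Fin n ⊕ Fin n) → ℝ)) :=
  (List.ofFn fun i : Fin n =>
    CliffordAlgebra.contractRight.flip (LinearMap.proj (Sum.inr i))).prod

lemma contractDxVol_map_inlExt_mul (w : ExteriorAlgebra ℝ (Fin n → ℝ)) :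
    contractDxVol n (ExteriorAlgebra.map (inlExt n) w *
      (List.ofFn fun i => ι ℝ (Pi.single (Sum.inr i) (1 : ℝ))).prod) =
      ExteriorAlgebra.map (inlExt n) w := by
  rw [contractDxVol, List.ofFn_eq_map, List.ofFn_eq_map]
  exact CliffordAlgebra.prod_contractRight_mul_prod_ι _ _ (fun i => by simp)
    (fun i j hij => by simp [hij.symm]) _ (List.nodup_finRange n)
    fun i _ => ExteriorAlgebra.contractRight_map_eq_zero _ (fun v => by simp [inlExt]) w

def dxVolCoeff (n : ℕ) : Om n →ₗ[ℝ] Coef n :=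
  TensorProduct.map (killCompl Sum.inl_injective).toLinearMap
    ((ExteriorAlgebra.map (LinearMap.funLeft ℝ ℝ Sum.inl)).toLinearMap ∘ₗ contractDxVol n)

lemma dxVolCoeff_jmap_mul_dxVol (f : Coef n) : dxVolCoeff n (jmap n f * dxVol n) = f := by
  induction f using TensorProduct.induction_on with
  | zero => simp
  | add f g hf hg => rw [map_add, add_mul, map_add, hf, hg]
  | tmul q w =>
    rw [jmap_tmul, dxVol_eq_one_tmul, Algebra.TensorProduct.tmul_mul_tmul, mul_one, dxVolCoeff,
      TensorProduct.map_tmul, AlgHom.toLinearMap_apply, killCompl_rename_app,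
      LinearMap.comp_apply, contractDxVol_map_inlExt_mul, AlgHom.toLinearMap_apply,
      ← AlgHom.comp_apply, ExteriorAlgebra.map_comp_map, funLeft_inl_comp_inlExt,
      ExteriorAlgebra.map_id, AlgHom.id_apply]

lemma dxVolCoeff_dp_mul (k : Fin n) (t : Om n) : dxVolCoeff n (dp n k * t) = 0 := by
  have hkill : killCompl Sum.inl_injective (X (Sum.inr k) : MvPolynomial (Fin n ⊕ Fin n) ℝ) = 0 :=
    by simp [killCompl]
  induction t using TensorProduct.induction_on with
  | zero => simp
  | add s t hs ht => rw [mul_add, map_add, hs, ht, add_zero]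
  | tmul q w =>
    rw [dp, Algebra.TensorProduct.tmul_mul_tmul, one_mul, dxVolCoeff, TensorProduct.map_tmul,
      AlgHom.toLinearMap_apply, map_mul, hkill, zero_mul, TensorProduct.zero_tmul]

lemma dxVolCoeff_om_mul (β : Om n) : dxVolCoeff n (om n * β) = 0 := by
  rw [om, Finset.sum_mul, map_sum]
  exact Finset.sum_eq_zero fun k _ => by rw [mul_assoc, dxVolCoeff_dp_mul]

end NormalForm

open NormalForm in
theorem normal_form_unique_general (n : ℕ) (f : Coef n) (β : Om n)
    (h : jmap n f * dxVol n = om n * β) :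
    f = 0 := by
  rw [← dxVolCoeff_jmap_mul_dxVol f, h, dxVolCoeff_om_mul]

/-- Uniqueness of normal-form representatives: if `f ∈ F` and `β ∈ Ω` satisfy
`j f * dxᵛ = ω * β`, then `f = 0`. -/
theorem normal_form_unique (n : ℕ) (hn : 1 ≤ n) (f : Coef n) (β : Om n)
    (h : jmap n f * dxVol n = om n * β) :
    f = 0 :=
  normal_form_unique_general n f β h
end
end

section
/- For every f ∈ F there exists β ∈ Ω with d (j f * dxᵛ) = ω * β; i.e. de Rham's d maps each normal-form representative into the image of ω∧, so the differential induced by d on the cohomology of (Ω, ω∧) vanishes (part (2) of the Theorem in local Darboux coordinates). -/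
open TensorProduct ExteriorAlgebra MvPolynomial

set_option synthInstance.maxHeartbeats 1000000
set_option maxHeartbeats 1000000

noncomputable section

variable (n : ℕ)

/-! Every summand `dx_k ∂/∂x_k` of `d` kills `α * dxᵛ`, since `dxᵛ` already contains `dx_k`, and
`∂/∂p_k` does not see `dxᵛ`; hence `d (α * dxᵛ) = ∑ₖ dp_k (∂α/∂p_k) dxᵛ`. Splitting off the factor
`dx_k` of `dxᵛ` as `dxᵛ = dx_k * (∂dxᵛ/∂dx_k)` turns the `k`-th summand into `dp_k dx_k` times a
form annihilated by every `dx_i` with `i ≠ k`, so the whole sum is `ω` times one form. -/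

namespace CliffordAlgebra

variable {R M : Type*} [CommRing R] [AddCommGroup M] [Module R M] {Q : QuadraticForm R M}

theorem contractLeft_mul (d : Module.Dual R M) (x y : CliffordAlgebra Q) :
    contractLeft d (x * y) = contractLeft d x * y + involute x * contractLeft d y := by
  induction x using CliffordAlgebra.induction generalizing y with
  | algebraMap r =>
      rw [contractLeft_algebraMap_mul, contractLeft_algebraMap, zero_mul, zero_add,
        AlgHom.commutes]
  | ι v =>
      rw [contractLeft_ι_mul, contractLeft_ι, involute_ι, Algebra.smul_def, neg_mul,
        sub_eq_add_neg]
  | mul a b ha hb =>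
      rw [mul_assoc, ha, hb, ha b, map_mul]
      noncomm_ring
  | add a b ha hb =>
      simp only [add_mul, map_add, ha, hb]
      abel

end CliffordAlgebra

namespace ExteriorAlgebra

open CliffordAlgebra

variable {R M : Type*} [CommRing R] [AddCommGroup M] [Module R M]

theorem ι_mul_eq_involute_mul (m : M) (x : ExteriorAlgebra R M) :
    ι R m * x = involute x * ι R m := by
  induction x using CliffordAlgebra.induction with
  | algebraMap r => rw [AlgHom.commutes, Algebra.commutes]
  | ι v =>
      rw [involute_ι, neg_mul]
      exact eq_neg_of_add_eq_zero_right (ι_add_mul_swap v m)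
  | mul a b ha hb => rw [← mul_assoc, ha, mul_assoc, hb, ← mul_assoc, map_mul]
  | add a b ha hb => rw [mul_add, ha, hb, map_add, add_mul]

theorem ι_mul_involute_mul (m : M) (x y : ExteriorAlgebra R M) :
    ι R m * (involute x * y) = x * (ι R m * y) := by
  rw [← mul_assoc, ι_mul_eq_involute_mul, involute_involute, mul_assoc]

theorem contractLeft_prod_map_ι_eq_zero (d : Module.Dual R M) (l : List M)
    (h : ∀ m ∈ l, d m = 0) : contractLeft d (l.map (ι R)).prod = 0 := by
  induction l with
  | nil => exact contractLeft_one (0 : QuadraticForm R M) d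
  | cons a t ih =>
      rw [List.map_cons, List.prod_cons, contractLeft_ι_mul, h a List.mem_cons_self,
        ih fun m hm => h m (List.mem_cons_of_mem a hm), mul_zero, zero_smul, sub_zero]

theorem ι_mul_contractLeft_of_ι_mul_eq_zero (d : Module.Dual R M) {m : M}
    {x : ExteriorAlgebra R M} (h : ι R m * x = 0) : ι R m * contractLeft d x = d m • x := by
  have := contractLeft_ι_mul (Q := 0) d m x
  rw [h, map_zero, eq_comm, sub_eq_zero] at this
  exact this.symm

end ExteriorAlgebra

open CliffordAlgebra

def dxVolExt (n : ℕ) : ExteriorAlgebra ℝ ((Fin n ⊕ Fin n) → ℝ) :=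
  ((List.ofFn fun i : Fin n => (Pi.single (Sum.inr i) 1 : (Fin n ⊕ Fin n) → ℝ)).map (ι ℝ)).prod

theorem one_tmul_list_prod (l : List (ExteriorAlgebra ℝ ((Fin n ⊕ Fin n) → ℝ))) :
    ((l.map fun w => (1 : MvPolynomial (Fin n ⊕ Fin n) ℝ) ⊗ₜ[ℝ] w).prod : Om n) =
      1 ⊗ₜ l.prod := by
  induction l with
  | nil => rfl
  | cons a t ih => rw [List.map_cons, List.prod_cons, ih, Algebra.TensorProduct.tmul_mul_tmul,
      one_mul, List.prod_cons]

theorem dxVol_eq_one_tmul : dxVol n = 1 ⊗ₜ dxVolExt n := by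
  rw [dxVol, dxVolExt, ← one_tmul_list_prod, List.map_map, List.map_ofFn]
  rfl

theorem ι_inr_mul_dxVolExt (k : Fin n) : ι ℝ (Pi.single (Sum.inr k) 1) * dxVolExt n = 0 := by
  rw [dxVolExt, List.map_ofFn]
  exact ι_mul_prod_list (fun i : Fin n => (Pi.single (Sum.inr i) 1 : (Fin n ⊕ Fin n) → ℝ)) k

theorem dpder_dxVolExt (k : Fin n) : dpder n k (dxVolExt n) = 0 := by
  refine contractLeft_prod_map_ι_eq_zero _ _ fun m hm => ?_
  obtain ⟨i, rfl⟩ := List.mem_ofFn.mp hm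
  simp

theorem ι_inr_mul_dxder_dxVolExt (i k : Fin n) :
    ι ℝ (Pi.single (Sum.inr i) 1) * dxder n k (dxVolExt n) = if i = k then dxVolExt n else 0 := by
  rw [dxder, ι_mul_contractLeft_of_ι_mul_eq_zero _ (ι_inr_mul_dxVolExt n i)]
  rcases eq_or_ne i k with rfl | hik
  · simp
  · simp [hik]

theorem dpder_mul (k : Fin n) (a b : ExteriorAlgebra ℝ ((Fin n ⊕ Fin n) → ℝ)) :
    dpder n k (a * b) = dpder n k a * b + involute a * dpder n k b :=
  CliffordAlgebra.contractLeft_mul _ a b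

theorem dRham_tmul_mul_dxVol (P : MvPolynomial (Fin n ⊕ Fin n) ℝ)
    (a : ExteriorAlgebra ℝ ((Fin n ⊕ Fin n) → ℝ)) :
    dRham n ((P ⊗ₜ a) * dxVol n) =
      ∑ k, (X (Sum.inr k) * P) ⊗ₜ (dpder n k a * dxVolExt n) := by
  have dx_part : ∀ k, dx n k * (pderiv (Sum.inl k) P ⊗ₜ (a * dxVolExt n)) = 0 := fun k => by
    rw [dx, Algebra.TensorProduct.tmul_mul_tmul, ← mul_assoc, ι_mul_eq_involute_mul, mul_assoc,
      ι_inr_mul_dxVolExt, mul_zero, tmul_zero]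
  simp [dxVol_eq_one_tmul, dRham, dx_part, dp, dpder_mul, dpder_dxVolExt]

theorem dp_mul_dx_mul_tmul (i : Fin n) (P : MvPolynomial (Fin n ⊕ Fin n) ℝ)
    (w : ExteriorAlgebra ℝ ((Fin n ⊕ Fin n) → ℝ)) :
    dp n i * dx n i * (P ⊗ₜ w) = (X (Sum.inr i) * P) ⊗ₜ (ι ℝ (Pi.single (Sum.inr i) 1) * w) := by
  rw [dp, dx, Algebra.TensorProduct.tmul_mul_tmul, Algebra.TensorProduct.tmul_mul_tmul, mul_one,
    one_mul]

theorem om_mul_tmul_involute_mul_dxder (k : Fin n) (P : MvPolynomial (Fin n ⊕ Fin n) ℝ)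
    (b : ExteriorAlgebra ℝ ((Fin n ⊕ Fin n) → ℝ)) :
    om n * (P ⊗ₜ (involute b * dxder n k (dxVolExt n))) =
      (X (Sum.inr k) * P) ⊗ₜ (b * dxVolExt n) := by
  simp only [om, Finset.sum_mul, dp_mul_dx_mul_tmul, ι_mul_involute_mul, ι_inr_mul_dxder_dxVolExt,
    mul_ite, mul_zero, tmul_ite, Finset.sum_ite_eq', Finset.mem_univ, if_true]

theorem exists_dRham_mul_dxVol_eq_om_mul (α : Om n) :
    ∃ β : Om n, dRham n (α * dxVol n) = om n * β := by
  induction α using TensorProduct.induction_on with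
  | zero => exact ⟨0, by simp⟩
  | tmul P a =>
      refine ⟨∑ k, P ⊗ₜ (involute (dpder n k a) * dxder n k (dxVolExt n)), ?_⟩
      simp only [dRham_tmul_mul_dxVol, Finset.mul_sum, om_mul_tmul_involute_mul_dxder]
  | add α α' hα hα' =>
      obtain ⟨β, hβ⟩ := hα
      obtain ⟨β', hβ'⟩ := hα'
      exact ⟨β + β', by rw [add_mul, map_add, hβ, hβ', mul_add]⟩

theorem deRham_normal_form_exact_general (n : ℕ) (f : Coef n) :
    ∃ β : Om n, dRham n (jmap n f * dxVol n) = om n * β :=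
  exists_dRham_mul_dxVol_eq_om_mul n (jmap n f)

/-- For every `f ∈ F` there exists `β ∈ Ω` with `d (j f * dxᵛ) = ω * β`; i.e.
de Rham's `d` maps each normal-form representative into the image of `ω∧`, so the differential
induced by `d` on the cohomology of `(Ω, ω∧)` vanishes. -/
theorem deRham_normal_form_exact (n : ℕ) (hn : 1 ≤ n) (f : Coef n) :
    ∃ β : Om n, dRham n (jmap n f * dxVol n) = om n * β :=
  deRham_normal_form_exact_general n f
end
end
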